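/- Let k be a commutative ring, X and Y finite posets, F : Y → J(X) an order-preserving map, y, y' ∈ Y, x ∈ F(y) and x' ∈ F(y'). Then the k-module Hom_{F_{Γ,k}}((i_y)_*(P_x), (i_{y'})_*(P_{x'})) is isomorphic to k if x' ≤ x, y' ≤ y and x ∈ F(y'), and is zero otherwise. -/

import Mathlib

/-!
Every element of `(i_y)_* P_x` at a point `p` is a multiple of the generator `1`, and for
`x ≤ p.1` the generator at `p` is the image of the generator at `(x, p.2)`. By naturality a map
`η : (i_y)_* P_x ⟶ (i_{y'})_* P_{x'}` is therefore determined by its values on the generators at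
the points `(x, b)`, and these all equal its value at `(x, y')` when `x' ≤ x` and vanish otherwise.
That value is `0` unless `y' ≤ y`, since `(i_y)_* P_x` vanishes at `(x, y')` otherwise, and when
`y' ≤ y` it can be any scalar: the map that is the identity wherever both functors are nonzero is
natural and has value `1`.
-/

open CategoryTheory
open scoped Classical
namespace PaperInterval
noncomputable def charFunctor (k : Type) [CommRing k] (P : Type) [PartialOrder P] (S : P → Prop)
    (hS : ∀ ⦃x y z : P⦄, x ≤ y → y ≤ z → S x → S z → S y) :
    P ⥤ ModuleCat.{0} k where
  obj x := ModuleCat.of k (PLift (S x) → k)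
  map {x x'} _ := ModuleCat.ofHom
    { toFun := fun g _ => if h : S x then g ⟨h⟩ else 0
      map_add' := by intro g₁ g₂; funext h'; by_cases h : S x <;> simp [h]
      map_smul' := by intro r g; funext h'; by_cases h : S x <;> simp [h] }
  map_id x := by
    apply ModuleCat.hom_ext; apply LinearMap.ext; intro g; funext h'
    by_cases h : S x
    · simp only [ModuleCat.ofHom, LinearMap.coe_mk, AddHom.coe_mk, dif_pos h]; congr 1
    · exact absurd h'.down h
  map_comp {x y z} f g := by
    apply ModuleCat.hom_ext; apply LinearMap.ext; intro u; funext h'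
    by_cases hx : S x
    · have hy : S y := hS (leOfHom f) (leOfHom g) hx h'.down
      simp only [ModuleCat.ofHom, dif_pos hx, dif_pos hy]; rfl
    · by_cases hy : S y <;>
        simp only [ModuleCat.ofHom, dif_neg hx, dif_pos, dif_neg, hy] <;> rfl

noncomputable def Mab (k : Type) [CommRing k] (X : Type) [PartialOrder X] (a b : X) :
    X ⥤ ModuleCat.{0} k :=
  charFunctor k X (fun x => a ≤ x ∧ x ≤ b)
    (fun _ _ _ h1 h2 hx hz => ⟨hx.1.trans h1, h2.trans hz.2⟩)

noncomputable def Pfun (k : Type) [CommRing k] (P : Type) [PartialOrder P] (p : P) :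
    P ⥤ ModuleCat.{0} k :=
  charFunctor k P (fun z => p ≤ z) (fun _ _ _ h1 _ hx _ => hx.trans h1)

noncomputable def Ifun (k : Type) [CommRing k] (P : Type) [PartialOrder P] (p : P) :
    P ⥤ ModuleCat.{0} k :=
  charFunctor k P (fun z => z ≤ p) (fun _ _ _ _ h2 _ hz => h2.trans hz)

variable {X Y : Type} [PartialOrder X] [PartialOrder Y]

/-- The poset `Γ` of generalized intervals attached to an order-preserving map
`F : Y → J(X)`. -/
def Gam (F : Y →o LowerSet X) : Type := {p : X × Y // p.1 ∈ F p.2}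

instance (F : Y →o LowerSet X) : PartialOrder (Gam F) :=
  inferInstanceAs (PartialOrder {p : X × Y // p.1 ∈ F p.2})

/-- The poset `F(y) ⊆ X` (a lower set of `X`), seen as a poset. -/
def FyP (F : Y →o LowerSet X) (y : Y) : Type := {x : X // x ∈ F y}

instance (F : Y →o LowerSet X) (y : Y) : PartialOrder (FyP F y) :=
  inferInstanceAs (PartialOrder {x : X // x ∈ F y})

/-- The order embedding `i_y : F(y) → Γ`, `x ↦ (x, y)`. -/
def iy (F : Y →o LowerSet X) (y : Y) (x : FyP F y) : Gam F := ⟨(x.1, y), x.2⟩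

lemma iy_monotone (F : Y →o LowerSet X) (y : Y) : Monotone (iy F y) :=
  fun _ _ h => ⟨h, le_rfl⟩

/-- `i_y` as a functor. -/
def iyFunctor (F : Y →o LowerSet X) (y : Y) : FyP F y ⥤ Gam F :=
  (iy_monotone F y).functor

/-- The restriction functor `i_y⁻¹ : F_{Γ,k} → F_{F(y),k}` (precomposition with `i_y`). -/
def res (k : Type) [CommRing k] (F : Y →o LowerSet X) (y : Y) :
    (Gam F ⥤ ModuleCat.{0} k) ⥤ (FyP F y ⥤ ModuleCat.{0} k) :=
  (Functor.whiskeringLeft _ _ _).obj (iyFunctor F y)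

lemma mem_of_le (F : Y →o LowerSet X) {p : Gam F} {y : Y} (h : p.1.2 ≤ y) :
    p.1.1 ∈ F y := F.monotone h p.2

/-- The value of the right adjoint `(i_y)⋆` on objects:
`((i_y)⋆ φ)(a,b) = φ(a)` if `b ≤ y` and `0` otherwise. -/
noncomputable def pushObj (k : Type) [CommRing k] (F : Y →o LowerSet X) (y : Y)
    (φ : FyP F y ⥤ ModuleCat.{0} k) : Gam F ⥤ ModuleCat.{0} k where
  obj p := ModuleCat.of k (∀ h : PLift (p.1.2 ≤ y), φ.obj ⟨p.1.1, mem_of_le F h.down⟩)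
  map {p q} f := ModuleCat.ofHom
    { toFun := fun u h =>
        φ.map (homOfLE (show (⟨p.1.1, mem_of_le F ((leOfHom f).2.trans h.down)⟩ : FyP F y) ≤
          ⟨q.1.1, mem_of_le F h.down⟩ from (leOfHom f).1))
          (u ⟨(leOfHom f).2.trans h.down⟩)
      map_add' := by intro u v; funext h; simp
      map_smul' := by intro r u; funext h; simp }
  map_id p := by
    apply ModuleCat.hom_ext; apply LinearMap.ext; intro u; funext h
    have e : ∀ v, φ.map (𝟙 (⟨p.1.1, mem_of_le F h.down⟩ : FyP F y)) v = v := by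
      intro v; exact LinearMap.congr_fun (congrArg ModuleCat.Hom.hom (φ.map_id _)) v
    exact e (u h)
  map_comp {p q r} f g := by
    apply ModuleCat.hom_ext; apply LinearMap.ext; intro u; funext h
    have e := φ.map_comp
      (homOfLE (show (⟨p.1.1, mem_of_le F ((leOfHom f).2.trans ((leOfHom g).2.trans h.down))⟩ : FyP F y) ≤
        ⟨q.1.1, mem_of_le F ((leOfHom g).2.trans h.down)⟩ from (leOfHom f).1))
      (homOfLE (show (⟨q.1.1, mem_of_le F ((leOfHom g).2.trans h.down)⟩ : FyP F y) ≤
        ⟨r.1.1, mem_of_le F h.down⟩ from (leOfHom g).1))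
    exact LinearMap.congr_fun (congrArg ModuleCat.Hom.hom e) (u ⟨(leOfHom f).2.trans ((leOfHom g).2.trans h.down)⟩)



/-- The right adjoint `(i_y)⋆ : F_{F(y),k} → F_{Γ,k}` of the restriction functor. -/
noncomputable def push (k : Type) [CommRing k] (F : Y →o LowerSet X) (y : Y) :
    (FyP F y ⥤ ModuleCat.{0} k) ⥤ (Gam F ⥤ ModuleCat.{0} k) where
  obj φ := pushObj k F y φ
  map {φ ψ} η :=
    { app := fun p => ModuleCat.ofHom
        { toFun := fun u h => η.app ⟨p.1.1, mem_of_le F h.down⟩ (u h)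
          map_add' := by intro u v; funext h; simp
          map_smul' := by intro r u; funext h; simp }
      naturality := by
        intro p q f
        apply ModuleCat.hom_ext; apply LinearMap.ext; intro u; funext h
        exact LinearMap.congr_fun
          (congrArg ModuleCat.Hom.hom (η.naturality (homOfLE (show (⟨p.1.1, mem_of_le F ((leOfHom f).2.trans h.down)⟩ : FyP F y) ≤
            ⟨q.1.1, mem_of_le F h.down⟩ from (leOfHom f).1))))
          (u ⟨(leOfHom f).2.trans h.down⟩) }
  map_id φ := rfl
  map_comp f g := rfl


section HomPushPfun

variable (k : Type) [CommRing k] {F : Y →o LowerSet X}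

noncomputable abbrev pushPfun {y : Y} {x : X} (hx : x ∈ F y) : Gam F ⥤ ModuleCat.{0} k :=
  (push k F y).obj (Pfun k (FyP F y) ⟨x, hx⟩)

variable {k} {y y' : Y} {x x' : X} (hx : x ∈ F y) (hx' : x' ∈ F y')

def pushPfunGen (p : Gam F) : (pushPfun k hx).obj p := fun _ _ => 1

lemma pushPfun_map_apply {p q : Gam F} (f : p ⟶ q) (u : (pushPfun k hx).obj p)
    (h₁ : PLift (q.1.2 ≤ y)) (h₂ : PLift (x ≤ q.1.1)) :
    (pushPfun k hx).map f u h₁ h₂ =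
      if hxp : x ≤ p.1.1 then u ⟨(leOfHom f).2.trans h₁.down⟩ ⟨hxp⟩ else 0 :=
  rfl

lemma pushPfun_subsingleton {p : Gam F} (hp : ¬(x ≤ p.1.1 ∧ p.1.2 ≤ y)) :
    Subsingleton ((pushPfun k hx).obj p) :=
  ⟨fun _ _ => funext fun h₁ => funext fun h₂ => absurd ⟨h₂.down, h₁.down⟩ hp⟩

lemma pushPfun_eq_smul_gen {p : Gam F} (hxp : x ≤ p.1.1) (hpy : p.1.2 ≤ y)
    (u : (pushPfun k hx).obj p) : u = u ⟨hpy⟩ ⟨hxp⟩ • pushPfunGen hx p :=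
  funext fun _ => funext fun _ => (mul_one _).symm

lemma pushPfun_map_gen {p q : Gam F} (f : p ⟶ q) (hxp : x ≤ p.1.1) :
    (pushPfun k hx).map f (pushPfunGen hx p) = pushPfunGen hx q :=
  funext fun h₁ => funext fun h₂ => (pushPfun_map_apply hx f _ h₁ h₂).trans (dif_pos hxp)

lemma mem_of_le_fst_of_snd_le {p : Gam F} (hxp : x ≤ p.1.1) (hpy' : p.1.2 ≤ y') : x ∈ F y' :=
  F.monotone hpy' ((F p.1.2).lower hxp p.2)

noncomputable def pushPfunHomOfLE (hxx : x' ≤ x) (hyy : y' ≤ y) :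
    pushPfun k hx ⟶ pushPfun k hx' where
  app p := ModuleCat.ofHom
    { toFun := fun u h₁ _ => if hxp : x ≤ p.1.1 then u ⟨h₁.down.trans hyy⟩ ⟨hxp⟩ else 0
      map_add' u v := by
        funext h₁ h₂
        by_cases hxp : x ≤ p.1.1
        · simp only [dif_pos hxp]; rfl
        · simp only [dif_neg hxp]; exact (add_zero 0).symm
      map_smul' c u := by
        funext h₁ h₂
        by_cases hxp : x ≤ p.1.1
        · simp only [dif_pos hxp]; rfl
        · simp only [dif_neg hxp]; exact (mul_zero c).symm }
  naturality p q f := by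
    ext u
    funext h₁ h₂
    have hpy : p.1.2 ≤ y := (leOfHom f).2.trans (h₁.down.trans hyy)
    show (if _ : x ≤ q.1.1 then (if hxp : x ≤ p.1.1 then u ⟨hpy⟩ ⟨hxp⟩ else 0) else 0) =
      (if _ : x' ≤ p.1.1 then (if hxp : x ≤ p.1.1 then u ⟨hpy⟩ ⟨hxp⟩ else 0) else 0)
    by_cases hxp : x ≤ p.1.1
    · rw [dif_pos (hxp.trans (leOfHom f).1), dif_pos (hxx.trans hxp)]
    · simp only [dif_neg hxp, dite_eq_ite, ite_self]

variable {hx hx'} (η : pushPfun k hx ⟶ pushPfun k hx')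

noncomputable def homCoeff (hxy' : x ∈ F y') (hxx : x' ≤ x) :
    (pushPfun k hx ⟶ pushPfun k hx') →ₗ[k] k where
  toFun η := η.app ⟨(x, y'), hxy'⟩ (pushPfunGen hx _) ⟨le_rfl⟩ ⟨hxx⟩
  map_add' _ _ := rfl
  map_smul' _ _ := rfl

lemma homCoeff_pushPfunHomOfLE (hxy' : x ∈ F y') (hxx : x' ≤ x) (hyy : y' ≤ y) :
    homCoeff hxy' hxx (pushPfunHomOfLE (k := k) hx hx' hxx hyy) = 1 :=
  dif_pos le_rfl

lemma app_eq_zero_of_not_mem {p : Gam F} (hp : ¬(x ≤ p.1.1 ∧ p.1.2 ≤ y))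
    (u : (pushPfun k hx).obj p) : η.app p u = 0 := by
  have := pushPfun_subsingleton (k := k) hx hp
  rw [Subsingleton.elim u 0, map_zero]

lemma app_apply_eq_mul_app_gen {p : Gam F} (hxp : x ≤ p.1.1) (hpy : p.1.2 ≤ y)
    (u : (pushPfun k hx).obj p) (h₁ : PLift (p.1.2 ≤ y')) (h₂ : PLift (x' ≤ p.1.1)) :
    η.app p u h₁ h₂ = u ⟨hpy⟩ ⟨hxp⟩ * η.app p (pushPfunGen hx p) h₁ h₂ := by
  have h : η.app p u = (u ⟨hpy⟩ ⟨hxp⟩ : k) • η.app p (pushPfunGen hx p) := by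
    conv_lhs => rw [pushPfun_eq_smul_gen hx hxp hpy u, map_smul]
  exact congrFun (congrFun h h₁) h₂

lemma app_gen_eq_of_le {r p : Gam F} (hrp : r ≤ p) (hxr : x ≤ r.1.1)
    (h₁ : PLift (p.1.2 ≤ y')) (h₂ : PLift (x' ≤ p.1.1)) :
    η.app p (pushPfunGen hx p) h₁ h₂ =
      if hs : x' ≤ r.1.1 then η.app r (pushPfunGen hx r) ⟨hrp.2.trans h₁.down⟩ ⟨hs⟩ else 0 := by
  rw [← pushPfun_map_gen hx (homOfLE hrp) hxr, NatTrans.naturality_apply]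
  exact pushPfun_map_apply hx' _ _ h₁ h₂

lemma app_gen_eq_homCoeff {p : Gam F} (hxp : x ≤ p.1.1) (hxx : x' ≤ x)
    (h₁ : PLift (p.1.2 ≤ y')) (h₂ : PLift (x' ≤ p.1.1)) :
    η.app p (pushPfunGen hx p) h₁ h₂ =
      homCoeff (mem_of_le_fst_of_snd_le hxp h₁.down) hxx η := by
  let r : Gam F := ⟨(x, p.1.2), (F p.1.2).lower hxp p.2⟩
  have from_r := app_gen_eq_of_le η (r := r)
    (p := ⟨(x, y'), mem_of_le_fst_of_snd_le hxp h₁.down⟩) ⟨le_rfl, h₁.down⟩ le_rfl ⟨le_rfl⟩ ⟨hxx⟩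
  rw [dif_pos hxx] at from_r
  rw [app_gen_eq_of_le η (show r ≤ p from ⟨hxp, le_rfl⟩) le_rfl, dif_pos hxx]
  exact from_r.symm

lemma app_gen_eq_zero_of_not_le {p : Gam F} (hxp : x ≤ p.1.1) (hxx : ¬x' ≤ x)
    (h₁ : PLift (p.1.2 ≤ y')) (h₂ : PLift (x' ≤ p.1.1)) :
    η.app p (pushPfunGen hx p) h₁ h₂ = 0 := by
  let r : Gam F := ⟨(x, p.1.2), (F p.1.2).lower hxp p.2⟩
  rw [app_gen_eq_of_le η (show r ≤ p from ⟨hxp, le_rfl⟩) le_rfl, dif_neg hxx]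

lemma app_apply_eq_mul_homCoeff {p : Gam F} (hxp : x ≤ p.1.1) (hpy : p.1.2 ≤ y)
    (hxx : x' ≤ x) (u : (pushPfun k hx).obj p) (h₁ : PLift (p.1.2 ≤ y'))
    (h₂ : PLift (x' ≤ p.1.1)) :
    η.app p u h₁ h₂ = u ⟨hpy⟩ ⟨hxp⟩ * homCoeff (mem_of_le_fst_of_snd_le hxp h₁.down) hxx η :=
  (app_apply_eq_mul_app_gen η hxp hpy u h₁ h₂).trans
    (congrArg _ (app_gen_eq_homCoeff η hxp hxx h₁ h₂))

lemma homCoeff_eq_zero_of_not_le (hxy' : x ∈ F y') (hxx : x' ≤ x) (hyy : ¬y' ≤ y) :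
    homCoeff hxy' hxx η = 0 :=
  congrFun (congrFun (app_eq_zero_of_not_mem η (fun h => hyy h.2) _) _) _

lemma eq_zero_of_not_and (h : ¬(x' ≤ x ∧ y' ≤ y ∧ x ∈ F y')) : η = 0 := by
  ext p u
  funext h₁ h₂
  show η.app p u h₁ h₂ = 0
  by_cases hp : x ≤ p.1.1 ∧ p.1.2 ≤ y
  · by_cases hxx : x' ≤ x
    · have hxy' := mem_of_le_fst_of_snd_le hp.1 h₁.down
      exact (app_apply_eq_mul_homCoeff η hp.1 hp.2 hxx u h₁ h₂).trans <| (congrArg _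
        (homCoeff_eq_zero_of_not_le η hxy' hxx fun hyy => h ⟨hxx, hyy, hxy'⟩)).trans (mul_zero _)
    · exact (app_apply_eq_mul_app_gen η hp.1 hp.2 u h₁ h₂).trans
        ((congrArg _ (app_gen_eq_zero_of_not_le η hp.1 hxx h₁ h₂)).trans (mul_zero _))
  · exact congrFun (congrFun (app_eq_zero_of_not_mem η hp u) h₁) h₂

lemma homCoeff_injective (hxy' : x ∈ F y') (hxx : x' ≤ x) :
    Function.Injective (homCoeff (k := k) (hx := hx) (hx' := hx') hxy' hxx) := by
  intro η ζ h
  ext p u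
  by_cases hp : x ≤ p.1.1 ∧ p.1.2 ≤ y
  · funext h₁ h₂
    exact (app_apply_eq_mul_homCoeff η hp.1 hp.2 hxx u h₁ h₂).trans
      ((congrArg _ h).trans (app_apply_eq_mul_homCoeff ζ hp.1 hp.2 hxx u h₁ h₂).symm)
  · rw [app_eq_zero_of_not_mem η hp, app_eq_zero_of_not_mem ζ hp]

variable (hx hx')

noncomputable def pushPfunHomEquiv (hxy' : x ∈ F y') (hxx : x' ≤ x) (hyy : y' ≤ y) :
    (pushPfun k hx ⟶ pushPfun k hx') ≃ₗ[k] k :=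
  LinearEquiv.ofBijective (homCoeff hxy' hxx) ⟨homCoeff_injective hxy' hxx, fun c =>
    ⟨c • pushPfunHomOfLE hx hx' hxx hyy,
      by rw [map_smul, homCoeff_pushPfunHomOfLE, smul_eq_mul, mul_one]⟩⟩

end HomPushPfun

theorem statement7_general (k : Type) [CommRing k] (X Y : Type) [PartialOrder X]
    [PartialOrder Y] (F : Y →o LowerSet X) (y y' : Y)
    (x : X) (hx : x ∈ F y) (x' : X) (hx' : x' ∈ F y') :
    (x' ≤ x ∧ y' ≤ y ∧ x ∈ F y' →
      Nonempty ((((push k F y).obj (Pfun k (FyP F y) ⟨x, hx⟩)) ⟶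
        ((push k F y').obj (Pfun k (FyP F y') ⟨x', hx'⟩))) ≃ₗ[k] k)) ∧
    (¬(x' ≤ x ∧ y' ≤ y ∧ x ∈ F y') →
      Subsingleton (((push k F y).obj (Pfun k (FyP F y) ⟨x, hx⟩)) ⟶
        ((push k F y').obj (Pfun k (FyP F y') ⟨x', hx'⟩)))) :=
  ⟨fun ⟨hxx, hyy, hxy'⟩ => ⟨pushPfunHomEquiv hx hx' hxy' hxx hyy⟩,
    fun h => ⟨fun η ζ => (eq_zero_of_not_and η h).trans (eq_zero_of_not_and ζ h).symm⟩⟩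

/-- The `k`-module `Hom_{F_{Γ,k}}((i_y)⋆(P_x), (i_{y'})⋆(P_{x'}))` is
isomorphic to `k` if `x' ≤ x`, `y' ≤ y` and `x ∈ F(y')`, and is zero otherwise. -/
theorem statement7 (k : Type) [CommRing k] (X Y : Type) [PartialOrder X] [Fintype X]
    [PartialOrder Y] [Fintype Y] (F : Y →o LowerSet X) (y y' : Y)
    (x : X) (hx : x ∈ F y) (x' : X) (hx' : x' ∈ F y') :
    (x' ≤ x ∧ y' ≤ y ∧ x ∈ F y' →
      Nonempty ((((push k F y).obj (Pfun k (FyP F y) ⟨x, hx⟩)) ⟶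
        ((push k F y').obj (Pfun k (FyP F y') ⟨x', hx'⟩))) ≃ₗ[k] k)) ∧
    (¬(x' ≤ x ∧ y' ≤ y ∧ x ∈ F y') →
      Subsingleton (((push k F y).obj (Pfun k (FyP F y) ⟨x, hx⟩)) ⟶
        ((push k F y').obj (Pfun k (FyP F y') ⟨x', hx'⟩)))) :=
  statement7_general k X Y F y y' x hx x' hx'

end PaperInterval
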